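/- For 0 < α < 1, the constant function f has ᶜD_c^α f(x) = 0 for x > c, where ᶜD_c^α f(x) = ∑_{i=1}^∞ C(α−1, i−1) f^{(i)}(x)/Γ(i+1−α) (x−c)^{i−α}; consequently, for a fixed-lower-limit fractional gradient iteration x_{k+1} = x_k − μ ᶜD_c^α f(x_k), any stationary point satisfies ᶜD_c^α f at that point equals zero, which for f(x) = (x−a)² with lower limit c ≠ a is in general not attained at x = a. -/

import Mathlib

/-- Generalized binomial coefficient `C(p, q) = Γ(p+1)/(Γ(q+1)Γ(p−q+1))`. -/
noncomputable def genBinom (p : ℝ) (q : ℕ) : ℝ :=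
  Real.Gamma (p + 1) / (Real.Gamma ((q : ℝ) + 1) * Real.Gamma (p - (q : ℝ) + 1))

/-- Series form of the Caputo-type fractional derivative used in the paper. -/
noncomputable def capD (c α : ℝ) (f : ℝ → ℝ) (x : ℝ) : ℝ :=
  ∑' i : ℕ, genBinom (α - 1) i * iteratedDeriv (i + 1) f x /
      Real.Gamma ((i : ℝ) + 2 - α) * (x - c) ^ ((i : ℝ) + 1 - α)

lemma iter_const (b : ℝ) : ∀ n : ℕ, iteratedDeriv (n + 1) (fun _ : ℝ => b) = 0 := by
  intro n
  induction n with
  | zero => funext x; simp [iteratedDeriv_one]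
  | succ k ih => rw [iteratedDeriv_succ, ih]; funext x; exact deriv_const x 0

lemma sq_d1 (a : ℝ) : iteratedDeriv 1 (fun y : ℝ => (y - a) ^ 2) = fun y => 2 * (y - a) := by
  funext y
  rw [iteratedDeriv_one]
  have h : HasDerivAt (fun y : ℝ => (y - a) ^ 2) (2 * (y - a)) y := by
    have := (((hasDerivAt_id y).sub_const a).fun_pow 2)
    simpa using this
  exact h.deriv

lemma sq_d2 (a : ℝ) : iteratedDeriv 2 (fun y : ℝ => (y - a) ^ 2) = fun _ => 2 := by
  rw [iteratedDeriv_succ, sq_d1]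
  funext y
  have h : HasDerivAt (fun y : ℝ => 2 * (y - a)) 2 y := by
    simpa using ((hasDerivAt_id y).sub_const a).const_mul 2
  exact h.deriv

lemma sq_dn (a : ℝ) : ∀ n : ℕ, iteratedDeriv (n + 3) (fun y : ℝ => (y - a) ^ 2) = 0 := by
  intro n
  induction n with
  | zero => rw [iteratedDeriv_succ, sq_d2]; funext x; simp
  | succ k ih => rw [iteratedDeriv_succ, ih]; funext x; exact deriv_const x 0

theorem stmt_13 (α : ℝ) (hα0 : 0 < α) (hα1 : α < 1) :
    (∀ (b c x : ℝ), c < x → capD c α (fun _ => b) x = 0) ∧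
    (∀ (a c : ℝ), c < a → capD c α (fun y => (y - a) ^ 2) a ≠ 0) := by
  constructor
  · intro b c x _
    unfold capD
    have : ∀ i : ℕ, genBinom (α - 1) i * iteratedDeriv (i + 1) (fun _ : ℝ => b) x /
        Real.Gamma ((i : ℝ) + 2 - α) * (x - c) ^ ((i : ℝ) + 1 - α) = 0 := by
      intro i; rw [iter_const b i]; simp
    simp only [this]; exact tsum_zero
  · intro a c hca
    unfold capD
    rw [tsum_eq_single 1 ?_]
    · rw [sq_d2]
      have hG1 : Real.Gamma (α - 1) ≠ 0 := by
        apply Real.Gamma_ne_zero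
        intro m
        match m with
        | 0 => simp; linarith
        | (k+1) =>
          have : (-(((k:ℝ)+1))) ≤ -1 := by linarith [Nat.cast_nonneg (α := ℝ) k]
          push_cast
          intro h; linarith
      have hGα : Real.Gamma α ≠ 0 := ne_of_gt (Real.Gamma_pos_of_pos hα0)
      have hbin : genBinom (α - 1) 1 ≠ 0 := by
        unfold genBinom
        push_cast
        have h2 : Real.Gamma (1 + 1 : ℝ) ≠ 0 := ne_of_gt (Real.Gamma_pos_of_pos (by norm_num))
        have : α - 1 + 1 = α := by ring
        rw [this]
        have : α - 1 - 1 + 1 = α - 1 := by ring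
        rw [this]
        exact div_ne_zero hGα (mul_ne_zero h2 hG1)
      have hG3 : Real.Gamma ((1 : ℕ) + 2 - α) ≠ 0 := by
        apply ne_of_gt; apply Real.Gamma_pos_of_pos; push_cast; linarith
      have hpow : (a - c) ^ ((1 : ℕ) + (1:ℝ) - α) ≠ 0 := by
        apply ne_of_gt; apply Real.rpow_pos_of_pos; linarith
      exact mul_ne_zero (div_ne_zero (mul_ne_zero hbin (by norm_num)) hG3) hpow
    · intro i hi
      match i, hi with
      | 0, _ =>
        rw [sq_d1]; simp
      | (k+2), _ =>
        have : k + 2 + 1 = k + 3 := by ring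
        rw [this, sq_dn]; simp
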